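/- Every typical path from x to A is an optimal path from x to A: if ω ∈ Ω_{x,A} satisfies Φ(ω_{i+1},A) ≤ Φ(ω_i,A) for all i, then max_i H(ω_i) = Φ(x,A). -/

import Mathlib

/- Abstract energy landscape: finite state space `X`, energy `H`, connectivity `q`. -/

variable {X : Type*}

/-- A path from `x` to `y`: a nonempty finite sequence of states with consecutive
states connected by `q`. -/
def IsPath (q : X → X → Prop) (ω : List X) (x y : X) : Prop :=
  ω ≠ [] ∧ ω.Chain' q ∧ ω.head? = some x ∧ ω.getLast? = some y

/-- The elevation (height) of a path: the maximal energy along it. -/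
noncomputable def elev (H : X → ℝ) (ω : List X) : ℝ :=
  sSup (H '' {z | z ∈ ω})

/-- The communication energy between two states: the minimal elevation over paths. -/
noncomputable def commE (H : X → ℝ) (q : X → X → Prop) (x y : X) : ℝ :=
  sInf {e | ∃ ω, IsPath q ω x y ∧ elev H ω = e}

/-- The communication energy between two sets of states. -/
noncomputable def commSet (H : X → ℝ) (q : X → X → Prop) (A B : Set X) : ℝ :=
  sInf {e | ∃ x ∈ A, ∃ y ∈ B, commE H q x y = e}

/-- A set of states is connected if any two of its states are joined by a path inside it. -/
def SetConn (q : X → X → Prop) (C : Set X) : Prop :=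
  ∀ x ∈ C, ∀ y ∈ C, ∃ ω, IsPath q ω x y ∧ ∀ z ∈ ω, z ∈ C

/-- The external boundary of a set of states. -/
def extBdry (q : X → X → Prop) (C : Set X) : Set X :=
  {y | y ∉ C ∧ ∃ x ∈ C, q x y}

/-- A non-trivial cycle: a connected set whose maximal internal energy is strictly
below the minimal energy on its external boundary. -/
def IsNontrivialCycle (H : X → ℝ) (q : X → X → Prop) (C : Set X) : Prop :=
  C.Nonempty ∧ SetConn q C ∧ sSup (H '' C) < sInf (H '' extBdry q C)

/-- A cycle: a singleton, or a non-trivial cycle. -/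
def IsCycle (H : X → ℝ) (q : X → X → Prop) (C : Set X) : Prop :=
  (∃ x, C = {x}) ∨ IsNontrivialCycle H q C

/-- The communication energy between a state and a set of states. -/
noncomputable def commA (H : X → ℝ) (q : X → X → Prop) (x : X) (A : Set X) : ℝ :=
  sInf {e | ∃ y ∈ A, commE H q x y = e}

/-- The initial cycle `C_A(x) = {x} ∪ {z : Φ(x,z) < Φ(x,A)}`. -/
def initCycle (H : X → ℝ) (q : X → X → Prop) (A : Set X) (x : X) : Set X :=
  {x} ∪ {z | commE H q x z < commA H q x A}

/-- `ω ∈ Ω_{x,A}`: a path from `x` ending in `A` which does not visit `A` before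
its endpoint. -/
def InOmega (q : X → X → Prop) (A : Set X) (x : X) (ω : List X) : Prop :=
  ω ≠ [] ∧ ω.Chain' q ∧ ω.head? = some x ∧
    (∃ y ∈ A, ω.getLast? = some y) ∧ ∀ z ∈ ω.dropLast, z ∉ A

/-! Every path from `z` starts at `z`, so `H z ≤ Φ(z, A)`; along a typical
path `Φ(·, A)` does not increase, hence the whole path stays below `Φ(x, A)`. Conversely the path
itself reaches `A`, so its elevation is at least `Φ(x, A)`. -/

theorem List.IsChain.apply_le_of_head?_eq {α β : Type*} [Preorder β] {f : α → β} {ω : List α}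
    {x z : α} (h : ω.IsChain fun a b => f b ≤ f a) (hx : ω.head? = some x) (hz : z ∈ ω) :
    f z ≤ f x := by
  obtain _ | ⟨a, t⟩ := ω
  · simp at hx
  obtain rfl : a = x := by simpa using hx
  have hpair : (List.map f (a :: t)).Pairwise (· ≥ ·) :=
    (List.isChain_map (R := (· ≥ ·)) f |>.2 h).pairwise
  rcases List.mem_cons.1 hz with rfl | hz
  · exact le_rfl
  · exact List.rel_of_pairwise_cons hpair (List.mem_map_of_mem hz)

section Landscape

variable (H : X → ℝ) (q : X → X → Prop) {ω : List X} {x y z : X} {A : Set X}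

lemma le_elev_of_mem (hz : z ∈ ω) : H z ≤ elev H ω :=
  le_csSup (ω.finite_toSet.image H).bddAbove ⟨z, hz, rfl⟩

lemma elev_le {c : ℝ} (hne : ω ≠ []) (h : ∀ z ∈ ω, H z ≤ c) : elev H ω ≤ c := by
  obtain ⟨z, hz⟩ := ω.exists_mem_of_ne_nil hne
  refine csSup_le ⟨H z, z, hz, rfl⟩ ?_
  rintro _ ⟨z, hz, rfl⟩
  exact h z hz

variable {q}

lemma IsPath.head_mem (h : IsPath q ω x y) : x ∈ ω :=
  List.mem_of_mem_head? h.2.2.1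

lemma InOmega.exists_isPath (h : InOmega q A x ω) : ∃ y ∈ A, IsPath q ω x y := by
  obtain ⟨hne, hchain, hhead, ⟨y, hyA, hlast⟩, -⟩ := h
  exact ⟨y, hyA, hne, hchain, hhead, hlast⟩

lemma le_commE (h : ∃ ω, IsPath q ω x y) : H x ≤ commE H q x y := by
  obtain ⟨ω, hω⟩ := h
  refine le_csInf ⟨elev H ω, ω, hω, rfl⟩ ?_
  rintro _ ⟨ω', hω', rfl⟩
  exact le_elev_of_mem H hω'.head_mem

lemma commE_le_elev (h : IsPath q ω x y) : commE H q x y ≤ elev H ω := by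
  refine csInf_le ⟨H x, ?_⟩ ⟨ω, h, rfl⟩
  rintro _ ⟨ω', hω', rfl⟩
  exact le_elev_of_mem H hω'.head_mem

lemma le_commA (hA : A.Nonempty) (hpaths : ∀ y ∈ A, ∃ ω, IsPath q ω x y) :
    H x ≤ commA H q x A := by
  obtain ⟨y, hy⟩ := hA
  refine le_csInf ⟨commE H q x y, y, hy, rfl⟩ ?_
  rintro _ ⟨y', hy', rfl⟩
  exact le_commE H (hpaths y' hy')

lemma commA_le_commE (hpaths : ∀ y ∈ A, ∃ ω, IsPath q ω x y) (hy : y ∈ A) :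
    commA H q x A ≤ commE H q x y := by
  refine csInf_le ⟨H x, ?_⟩ ⟨y, hy, rfl⟩
  rintro _ ⟨y', hy', rfl⟩
  exact le_commE H (hpaths y' hy')

end Landscape

theorem typical_implies_optimal_general (H : X → ℝ) (q : X → X → Prop)
    (hirr : ∀ x y : X, ∃ ω, IsPath q ω x y)
    (A : Set X) (x : X)
    (ω : List X) (hω : InOmega q A x ω)
    (hmono : ω.Chain' (fun a b => commA H q b A ≤ commA H q a A)) :
    elev H ω = commA H q x A := by
  obtain ⟨y, hyA, hpath⟩ := hω.exists_isPath
  have hpaths (z : X) : ∀ y ∈ A, ∃ ω, IsPath q ω z y := fun y _ => hirr z y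
  apply le_antisymm
  · refine elev_le H hpath.1 fun z hz => ?_
    calc H z ≤ commA H q z A := le_commA H ⟨y, hyA⟩ (hpaths z)
      _ ≤ commA H q x A := hmono.apply_le_of_head?_eq hpath.2.2.1 hz
  · exact (commA_le_commE H (hpaths x) hyA).trans (commE_le_elev H hpath)

/-- every typical path is optimal: if `ω ∈ Ω_{x,A}` satisfies
`Φ(ω_{i+1},A) ≤ Φ(ω_i,A)` for all `i`, then its elevation equals `Φ(x,A)`. -/
theorem typical_implies_optimal [Fintype X] (H : X → ℝ) (q : X → X → Prop)
    (hsymm : ∀ x y, q x y → q y x)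
    (hirr : ∀ x y : X, ∃ ω, IsPath q ω x y)
    (A : Set X) (hA : A.Nonempty) (x : X) (hx : x ∉ A)
    (ω : List X) (hω : InOmega q A x ω)
    (hmono : ω.Chain' (fun a b => commA H q b A ≤ commA H q a A)) :
    elev H ω = commA H q x A :=
  typical_implies_optimal_general H q hirr A x ω hω hmono
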